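/- arXiv:1305.2634 — 4 statements merged into one kernel-verified Lean document; each statement's English description precedes it below -/
import Mathlib

section
/- Suppose the minorization condition holds with constant β ∈ (0,1), i.e. p_i(x, A) ≥ β Π(A) for all i ≥ 1, all x ∈ E and all measurable A. Define for each i the kernel ν_i(x, A) = (p_i(x, A) − β Π(A)) / (1 − β), and let ν^n(x₀, ·) denote the composition ν_1 ν_2 ⋯ ν_n applied to x₀. Then each ν_i is a Markov kernel with Π as invariant measure, and for every n ≥ 1 the n-step distribution satisfies P^n(x₀, ·) − Π(·) = (1 − β)^n ( ν^n(x₀, ·) − Π(·) ) as signed measures, for every initial point x₀. -/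
open MeasureTheory ProbabilityTheory
open scoped ENNReal

/-- `stepsKernel p n` is the composition `p₁ p₂ ⋯ pₙ` (first apply `p 1`, then `p 2`, …),
so that `stepsKernel p n x₀` is the `n`-step distribution `Pⁿ(x₀, ·)`. -/
noncomputable def stepsKernel {E : Type*} [MeasurableSpace E]
    (p : ℕ → Kernel E E) : ℕ → Kernel E E
  | 0 => Kernel.id
  | n + 1 => (p (n + 1)) ∘ₖ stepsKernel p n

/-!
The defining identity of `νᵢ` says that, as measures, `pᵢ(x) = β Π + (1 - β) νᵢ(x)`.
Integrating against `Π` and cancelling the `β Π` part shows that `Π` is `νᵢ`-invariant.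
Composing with the mixture then propagates it along the chain: if
`Pⁿ(x) = (1 - β)ⁿ νⁿ(x) + (1 - (1 - β)ⁿ) Π`, then
`Pⁿ⁺¹(x) = β Π + (1 - β) νₙ₊₁ Pⁿ(x)`, and `νₙ₊₁` fixes `Π`, so the weights become
`(1 - β)ⁿ⁺¹` and `β + (1 - β)(1 - (1 - β)ⁿ) = 1 - (1 - β)ⁿ⁺¹`.
-/

namespace MeasureTheory.Measure

variable {E : Type*} [MeasurableSpace E]

noncomputable def mixture (t : ℝ) (μ ν : Measure E) : Measure E :=
  ENNReal.ofReal t • μ + ENNReal.ofReal (1 - t) • ν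

instance {t : ℝ} {μ ν : Measure E} [IsFiniteMeasure μ] [IsFiniteMeasure ν] :
    IsFiniteMeasure (mixture t μ ν) :=
  ⟨by simp only [mixture, add_apply, smul_apply, smul_eq_mul]; finiteness⟩

lemma mixture_one (μ ν : Measure E) : mixture 1 μ ν = μ := by
  simp [mixture]

lemma toReal_mixture_apply {t : ℝ} (ht0 : 0 ≤ t) (ht1 : t ≤ 1) (μ ν : Measure E)
    [IsFiniteMeasure μ] [IsFiniteMeasure ν] (A : Set E) :
    (mixture t μ ν A).toReal = t * (μ A).toReal + (1 - t) * (ν A).toReal := by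
  rw [mixture, add_apply, smul_apply, smul_apply, smul_eq_mul, smul_eq_mul,
    ENNReal.toReal_add (by finiteness) (by finiteness), ENNReal.toReal_mul, ENNReal.toReal_mul,
    ENNReal.toReal_ofReal ht0, ENNReal.toReal_ofReal (sub_nonneg.2 ht1)]

lemma mixture_mixture {s t : ℝ} (hs0 : 0 ≤ s) (hs1 : s ≤ 1) (ht1 : t ≤ 1)
    (μ ν : Measure E) :
    mixture s ν (mixture t μ ν) = mixture ((1 - s) * t) μ ν := by
  have h1s : 0 ≤ 1 - s := sub_nonneg.2 hs1
  have h1t : 0 ≤ 1 - t := sub_nonneg.2 ht1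
  have hcoef : 1 - (1 - s) * t = s + (1 - s) * (1 - t) := by ring
  simp only [mixture, smul_add, smul_smul, ← ENNReal.ofReal_mul h1s, hcoef,
    ENNReal.ofReal_add hs0 (mul_nonneg h1s h1t), add_smul]
  abel

lemma comp_mixture (κ : Kernel E E) (t : ℝ) (μ ν : Measure E) :
    κ ∘ₘ mixture t μ ν = mixture t (κ ∘ₘ μ) (κ ∘ₘ ν) := by
  simp only [mixture, comp_add, comp_smul]

lemma comp_eq_mixture_of_apply_eq_mixture {κ η : Kernel E E} {t : ℝ} {π : Measure E}
    (hκ : ∀ x, κ x = mixture t π (η x)) (m : Measure E) [IsProbabilityMeasure m] :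
    κ ∘ₘ m = mixture t π (η ∘ₘ m) := by
  ext A hA
  simp only [bind_apply hA κ.aemeasurable, hκ, mixture, add_apply, smul_apply, smul_eq_mul,
    bind_apply hA η.aemeasurable]
  rw [lintegral_add_left measurable_const, lintegral_const, measure_univ, mul_one,
    lintegral_const_mul _ (η.measurable_coe hA)]

lemma eq_of_mixture_eq_left {t : ℝ} (ht0 : 0 ≤ t) (ht1 : t < 1) {μ π : Measure E}
    [IsFiniteMeasure π] (h : mixture t π μ = π) : μ = π := by
  ext A -
  have hA : ENNReal.ofReal t * π A + ENNReal.ofReal (1 - t) * μ A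
      = ENNReal.ofReal t * π A + ENNReal.ofReal (1 - t) * π A := by
    rw [← add_mul, ← ENNReal.ofReal_add ht0 (sub_nonneg.2 ht1.le), add_sub_cancel,
      ENNReal.ofReal_one, one_mul]
    simpa only [mixture, add_apply, smul_apply, smul_eq_mul] using congrArg (· A) h
  rw [ENNReal.add_right_inj (by finiteness)] at hA
  exact (ENNReal.mul_right_inj (by simpa using ht1) ENNReal.ofReal_ne_top).1 hA

lemma eq_mixture_of_toReal_apply_eq {μ π ν : Measure E} [IsFiniteMeasure μ]
    [IsFiniteMeasure π] [IsFiniteMeasure ν] {β : ℝ} (hβ0 : 0 ≤ β) (hβ1 : β < 1)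
    (h : ∀ A, MeasurableSet A → (ν A).toReal = ((μ A).toReal - β * (π A).toReal) / (1 - β)) :
    μ = mixture β π ν := by
  ext A hA
  rw [← ENNReal.toReal_eq_toReal_iff' (measure_ne_top _ _) (measure_ne_top _ _),
    toReal_mixture_apply hβ0 hβ1.le, h A hA]
  field_simp [(sub_pos.2 hβ1).ne']
  ring

lemma isProbabilityMeasure_of_toReal_apply_eq {μ π ν : Measure E} [IsProbabilityMeasure μ]
    [IsProbabilityMeasure π] {β : ℝ} (hβ : β ≠ 1)
    (h : (ν .univ).toReal = ((μ .univ).toReal - β * (π .univ).toReal) / (1 - β)) :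
    IsProbabilityMeasure ν := by
  rw [measure_univ (μ := μ), measure_univ (μ := π), ENNReal.toReal_one, mul_one,
    div_self (sub_ne_zero.2 hβ.symm), ENNReal.toReal_eq_one_iff] at h
  exact ⟨h⟩

end MeasureTheory.Measure

namespace ProbabilityTheory.Kernel

variable {E : Type*} [MeasurableSpace E]

lemma invariant_iff_lintegral_apply {κ : Kernel E E} {π : Measure E} :
    κ.Invariant π ↔ ∀ A, MeasurableSet A → ∫⁻ x, κ x A ∂π = π A := by
  simp only [Invariant, Measure.ext_iff]
  refine forall₂_congr fun A hA => ?_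
  rw [Measure.bind_apply hA κ.aemeasurable]

lemma Invariant.of_apply_eq_mixture {κ η : Kernel E E} {π : Measure E} [IsProbabilityMeasure π]
    {β : ℝ} (hβ0 : 0 ≤ β) (hβ1 : β < 1) (hκη : ∀ x, κ x = Measure.mixture β π (η x))
    (hκ : κ.Invariant π) : η.Invariant π :=
  Measure.eq_of_mixture_eq_left hβ0 hβ1 <| by
    rw [← Measure.comp_eq_mixture_of_apply_eq_mixture hκη]; exact hκ

end ProbabilityTheory.Kernel

section stepsKernel

variable {E : Type*} [MeasurableSpace E]

lemma isMarkovKernel_stepsKernel {p : ℕ → Kernel E E} (hp : ∀ i ≥ 1, IsMarkovKernel (p i)) :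
    ∀ n, IsMarkovKernel (stepsKernel p n)
  | 0 => by rw [stepsKernel]; infer_instance
  | n + 1 => by
    have := hp (n + 1) n.succ_pos
    have := isMarkovKernel_stepsKernel hp n
    rw [stepsKernel]; infer_instance

lemma stepsKernel_apply_eq_mixture {p ν : ℕ → Kernel E E} {π : Measure E} {β : ℝ}
    (hβ0 : 0 ≤ β) (hβ1 : β ≤ 1) (hp : ∀ i ≥ 1, IsMarkovKernel (p i))
    (hpν : ∀ i ≥ 1, ∀ x, p i x = Measure.mixture β π (ν i x))
    (hν : ∀ i ≥ 1, (ν i).Invariant π) (n : ℕ) (x : E) :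
    stepsKernel p n x = Measure.mixture ((1 - β) ^ n) (stepsKernel ν n x) π := by
  induction n with
  | zero => exact (Measure.mixture_one _ _).symm
  | succ n ih =>
    have := isMarkovKernel_stepsKernel hp n
    calc stepsKernel p (n + 1) x = p (n + 1) ∘ₘ stepsKernel p n x := rfl
      _ = Measure.mixture β π (ν (n + 1) ∘ₘ stepsKernel p n x) :=
        Measure.comp_eq_mixture_of_apply_eq_mixture (hpν _ n.succ_pos) _
      _ = Measure.mixture β π
            (Measure.mixture ((1 - β) ^ n) (stepsKernel ν (n + 1) x) π) := by
        rw [ih, Measure.comp_mixture, (hν _ n.succ_pos).def]; rfl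
      _ = Measure.mixture ((1 - β) ^ (n + 1)) (stepsKernel ν (n + 1) x) π := by
        rw [Measure.mixture_mixture hβ0 hβ1 (pow_le_one₀ (sub_nonneg.2 hβ1) (by linarith)),
          pow_succ']

end stepsKernel

theorem residual_kernel_decomposition_general
    {E : Type*} [MeasurableSpace E]
    (Pi : Measure E) [IsProbabilityMeasure Pi]
    (p : ℕ → Kernel E E) [∀ i, IsMarkovKernel (p i)]
    (hinv : ∀ i ≥ 1, ∀ A : Set E, MeasurableSet A → ∫⁻ x, p i x A ∂Pi = Pi A)
    (β : ℝ) (hβ0 : 0 < β) (hβ1 : β < 1)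
    (ν : ℕ → Kernel E E)
    (hν : ∀ i ≥ 1, ∀ x : E, ∀ A : Set E, MeasurableSet A →
      (ν i x A).toReal = ((p i x A).toReal - β * (Pi A).toReal) / (1 - β)) :
    (∀ i ≥ 1, IsMarkovKernel (ν i) ∧
      ∀ A : Set E, MeasurableSet A → ∫⁻ x, ν i x A ∂Pi = Pi A) ∧
    (∀ n ≥ 1, ∀ x₀ : E, ∀ A : Set E, MeasurableSet A →
      (stepsKernel p n x₀ A).toReal - (Pi A).toReal
        = (1 - β) ^ n * ((stepsKernel ν n x₀ A).toReal - (Pi A).toReal)) := by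
  have hν_markov : ∀ i ≥ 1, IsMarkovKernel (ν i) := fun i hi =>
    ⟨fun x => Measure.isProbabilityMeasure_of_toReal_apply_eq hβ1.ne (hν i hi x _ .univ)⟩
  have hpν : ∀ i ≥ 1, ∀ x, p i x = Measure.mixture β Pi (ν i x) := fun i hi x =>
    have := hν_markov i hi
    Measure.eq_mixture_of_toReal_apply_eq hβ0.le hβ1 (hν i hi x)
  have hν_inv : ∀ i ≥ 1, (ν i).Invariant Pi := fun i hi =>
    .of_apply_eq_mixture hβ0.le hβ1 (hpν i hi) (Kernel.invariant_iff_lintegral_apply.2 (hinv i hi))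
  refine ⟨fun i hi => ⟨hν_markov i hi, Kernel.invariant_iff_lintegral_apply.1 (hν_inv i hi)⟩,
    fun n _ x₀ A _ => ?_⟩
  have h1β : 0 ≤ 1 - β := by linarith
  have := isMarkovKernel_stepsKernel hν_markov n
  rw [stepsKernel_apply_eq_mixture hβ0.le hβ1.le (fun i _ => inferInstance) hpν hν_inv,
    Measure.toReal_mixture_apply (pow_nonneg h1β n) (pow_le_one₀ h1β (by linarith))]
  ring

/-- Under the minorization condition `pᵢ(x, A) ≥ β Pi(A)`, the residual
kernels `νᵢ(x, A) = (pᵢ(x, A) − β Pi(A)) / (1 − β)` are Markov kernels leaving `Pi`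
invariant, and `Pⁿ(x₀, ·) − Pi(·) = (1 − β)ⁿ (νⁿ(x₀, ·) − Pi(·))` as signed measures. -/
theorem residual_kernel_decomposition
    {E : Type*} [MeasurableSpace E]
    (Pi : Measure E) [IsProbabilityMeasure Pi]
    (p : ℕ → Kernel E E) [∀ i, IsMarkovKernel (p i)]
    (hinv : ∀ i ≥ 1, ∀ A : Set E, MeasurableSet A → ∫⁻ x, p i x A ∂Pi = Pi A)
    (β : ℝ) (hβ0 : 0 < β) (hβ1 : β < 1)
    (hminor : ∀ i ≥ 1, ∀ x : E, ∀ A : Set E, MeasurableSet A →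
      ENNReal.ofReal β * Pi A ≤ p i x A)
    (ν : ℕ → Kernel E E)
    (hν : ∀ i ≥ 1, ∀ x : E, ∀ A : Set E, MeasurableSet A →
      (ν i x A).toReal = ((p i x A).toReal - β * (Pi A).toReal) / (1 - β)) :
    (∀ i ≥ 1, IsMarkovKernel (ν i) ∧
      ∀ A : Set E, MeasurableSet A → ∫⁻ x, ν i x A ∂Pi = Pi A) ∧
    (∀ n ≥ 1, ∀ x₀ : E, ∀ A : Set E, MeasurableSet A →
      (stepsKernel p n x₀ A).toReal - (Pi A).toReal
        = (1 - β) ^ n * ((stepsKernel ν n x₀ A).toReal - (Pi A).toReal)) :=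
  residual_kernel_decomposition_general Pi p hinv β hβ0 hβ1 ν hν
end

section
/- (Theorem 2, Strong law of large numbers.) Suppose the minorization condition holds with constant β ∈ (0,1), i.e. p_i(x, A) ≥ β Π(A) for all i ≥ 1, all x ∈ E and all measurable A. Let h : E → ℝ be a bounded measurable function and let (x_n)_{n≥0} be the time-inhomogeneous Markov chain with initial point x₀ and transition kernels (p_i), realized on the canonical path space. Then S_n/n → ∫ h dΠ almost surely, where S_n = Σ_{i=1}^n h(x_i). -/
open MeasureTheory ProbabilityTheory Filter
open scoped ENNReal NNReal Topology

/-!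
Under the minorization condition each `p i` shrinks the sup-norm of a bounded function that is
centred under `Π` by the factor `1 - β` (Doeblin), and invariance keeps the image centred. Hence
`p (i + 1) ⋯ p (i + m) f` is bounded by `(1 - β) ^ m * M` for centred `f` with `|f| ≤ M`, and the
Markov property turns this into the covariance bound `|E[f(xᵢ) f(xⱼ)]| ≤ M² (1 - β) ^ |i - j|`.
Summing, `E[Sₙ²] ≤ 2 M² n / β`; Chebyshev and Borel–Cantelli along the squares give
`S_{m²} / m² → 0` almost surely, and bounded increments fill in the gaps between squares.
-/

section Integrals

variable {α γ : Type*} [MeasurableSpace α] [MeasurableSpace γ]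

lemma Measurable.integrable_of_abs_le {μ : Measure α} [IsFiniteMeasure μ] {f : α → ℝ}
    (hf : Measurable f) {M : ℝ} (hM : ∀ x, |f x| ≤ M) : Integrable f μ :=
  .of_bound hf.aestronglyMeasurable M (ae_of_all _ hM)

lemma MeasureTheory.Measure.integral_comp {κ : Kernel α γ} [IsSFiniteKernel κ] {m : Measure α}
    [SFinite m] {φ : γ → ℝ} (hφ : Integrable φ (κ ∘ₘ m)) :
    ∫ y, φ y ∂(κ ∘ₘ m) = ∫ x, ∫ y, φ y ∂κ x ∂m := by
  rw [Measure.comp_eq_comp_const_apply] at hφ ⊢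
  rw [Kernel.integral_comp hφ, Kernel.const_apply]

lemma ProbabilityTheory.Kernel.Invariant.integral_integral {κ : Kernel α α} [IsSFiniteKernel κ]
    {π : Measure α} [SFinite π] (hκ : κ.Invariant π) {φ : α → ℝ} (hφ : Integrable φ π) :
    ∫ x, ∫ y, φ y ∂κ x ∂π = ∫ x, φ x ∂π := by
  have hφ' : Integrable φ (κ ∘ₘ π) := by rwa [hκ.def]
  rw [← Measure.integral_comp hφ', hκ.def]

lemma isFiniteMeasure_withDensity_of_le_one {μ : Measure α} [IsFiniteMeasure μ] {f : α → ℝ≥0∞}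
    (hf : ∀ a, f a ≤ 1) : IsFiniteMeasure (μ.withDensity f) :=
  isFiniteMeasure_of_le μ <| by
    simpa using withDensity_mono (μ := μ) (g := 1) (ae_of_all _ hf)

lemma abs_integral_le_of_abs_le {ν : Measure α} [IsProbabilityMeasure ν] {φ : α → ℝ} {M : ℝ}
    (hM : ∀ x, |φ x| ≤ M) : |∫ x, φ x ∂ν| ≤ M := by
  simpa using norm_integral_le_of_norm_le_const (μ := ν) (f := φ) (ae_of_all _ hM)

lemma abs_integral_le_of_smul_le {ν π : Measure α} [IsProbabilityMeasure ν]
    [IsProbabilityMeasure π] {β : ℝ} (hβ : 0 ≤ β) (hle : ENNReal.ofReal β • π ≤ ν)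
    {φ : α → ℝ} (hφ : Measurable φ) {M : ℝ} (hM : ∀ x, |φ x| ≤ M)
    (hφ0 : ∫ x, φ x ∂π = 0) : |∫ x, φ x ∂ν| ≤ (1 - β) * M := by
  have hπ := hφ.integrable_of_abs_le (μ := π) hM
  have hν := hφ.integrable_of_abs_le (μ := ν) hM
  have hmono : ∀ ψ : α → ℝ, Integrable ψ ν → (∀ x, 0 ≤ ψ x) →
      β * ∫ x, ψ x ∂π ≤ ∫ x, ψ x ∂ν := fun ψ hψ hψ0 => by
    have := integral_mono_measure hle (ae_of_all _ hψ0) hψ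
    rwa [integral_smul_measure, ENNReal.toReal_ofReal hβ, smul_eq_mul] at this
  have hup := hmono (fun x => M - φ x) ((integrable_const M).sub hν) fun x => by
    linarith [(abs_le.1 (hM x)).2]
  have hlo := hmono (fun x => M + φ x) ((integrable_const M).add hν) fun x => by
    linarith [(abs_le.1 (hM x)).1]
  rw [integral_sub (integrable_const M) hπ, integral_sub (integrable_const M) hν] at hup
  rw [integral_add (integrable_const M) hπ, integral_add (integrable_const M) hν] at hlo
  simp only [integral_const, probReal_univ, smul_eq_mul, one_mul, hφ0] at hup hlo
  exact abs_le.2 ⟨by linarith, by linarith⟩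

end Integrals

lemma abs_sub_le_of_abs_sub_succ_le {s : ℕ → ℝ} {M : ℝ} (hs : ∀ n, |s (n + 1) - s n| ≤ M)
    {k n : ℕ} (hkn : k ≤ n) : |s n - s k| ≤ (n - k : ℕ) * M := by
  calc |s n - s k| = dist (s k) (s n) := by rw [Real.dist_eq, abs_sub_comm]
    _ ≤ ∑ i ∈ Finset.Ico k n, dist (s i) (s (i + 1)) := dist_le_Ico_sum_dist s hkn
    _ ≤ ∑ _i ∈ Finset.Ico k n, M :=
        Finset.sum_le_sum fun i _ => by rw [Real.dist_eq, abs_sub_comm]; exact hs i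
    _ = (n - k : ℕ) * M := by simp

lemma tendsto_div_of_tendsto_div_sq {s : ℕ → ℝ} {M : ℝ} (hs : ∀ n, |s (n + 1) - s n| ≤ M)
    (hsq : Tendsto (fun m => s (m ^ 2) / (m ^ 2 : ℕ)) atTop (𝓝 0)) :
    Tendsto (fun n => s n / n) atTop (𝓝 0) := by
  have hM : 0 ≤ M := (abs_nonneg _).trans (hs 0)
  have hsqrt : Tendsto Nat.sqrt atTop atTop :=
    tendsto_atTop_atTop.2 fun b => ⟨b ^ 2, fun n hn => by
      simpa [Nat.sqrt_eq'] using Nat.sqrt_le_sqrt hn⟩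
  have hbound : Tendsto (fun n : ℕ => |s (n.sqrt ^ 2) / (n.sqrt ^ 2 : ℕ)| + 2 * M / n.sqrt) atTop
      (𝓝 0) := by
    simpa using (hsq.abs.comp hsqrt).add
      (tendsto_const_nhds.div_atTop (tendsto_natCast_atTop_atTop.comp hsqrt))
  refine squeeze_zero_norm' ?_ hbound
  filter_upwards [eventually_ge_atTop 1] with n hn
  set m := n.sqrt
  have hmn : m ^ 2 ≤ n := Nat.sqrt_le' n
  have hgap : n - m ^ 2 ≤ 2 * m := by
    have : n < (m + 1) ^ 2 := Nat.lt_succ_sqrt' n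
    rw [add_sq] at this
    omega
  have hdiff : |s n - s (m ^ 2)| ≤ 2 * m * M := by
    refine (abs_sub_le_of_abs_sub_succ_le hs hmn).trans ?_
    gcongr
    exact_mod_cast hgap
  rw [Real.norm_eq_abs, abs_div, Nat.abs_cast]
  calc |s n| / n ≤ (|s (m ^ 2)| + 2 * m * M) / n := by
        gcongr
        linarith [abs_sub_abs_le_abs_sub (s n) (s (m ^ 2))]
    _ ≤ (|s (m ^ 2)| + 2 * m * M) / (m ^ 2 : ℕ) := by gcongr
    _ = |s (m ^ 2) / (m ^ 2 : ℕ)| + 2 * M / m := by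
        rw [abs_div, Nat.abs_cast]; push_cast; field_simp

lemma sum_pow_dist_le {r : ℝ} (hr0 : 0 ≤ r) (hr1 : r < 1) (i : ℕ) (s : Finset ℕ) :
    ∑ j ∈ s, r ^ Nat.dist i j ≤ 2 / (1 - r) := by
  obtain ⟨N, hN⟩ := s.bddAbove
  have hgeom : ∀ n, ∑ d ∈ Finset.range n, r ^ d ≤ 1 / (1 - r) := fun n => by
    simpa using geom_sum_Ico_le_of_lt_one (m := 0) (n := n) hr0 hr1
  calc ∑ j ∈ s, r ^ Nat.dist i j
      ≤ ∑ j ∈ Finset.range (i + 1 + N), r ^ Nat.dist i j := by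
        refine Finset.sum_le_sum_of_subset_of_nonneg (fun j hj => ?_) fun _ _ _ => by positivity
        have := hN hj
        simp only [Finset.mem_range]
        omega
    _ = ∑ j ∈ Finset.range (i + 1), r ^ (i - j) + ∑ k ∈ Finset.range N, r ^ (k + 1) := by
        rw [Finset.sum_range_add]
        congr 1
        · refine Finset.sum_congr rfl fun j hj => ?_
          rw [Nat.dist_eq_sub_of_le_right (by simpa [Nat.lt_succ_iff] using hj)]
        · refine Finset.sum_congr rfl fun k _ => ?_
          rw [Nat.dist_eq_sub_of_le (by omega)]
          congr 1
          omega
    _ ≤ 1 / (1 - r) + 1 / (1 - r) := by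
        gcongr
        · rw [← Finset.sum_range_reflect]
          refine (Finset.sum_le_sum fun j hj => ?_).trans (hgeom (i + 1))
          rw [Finset.mem_range] at hj
          rw [show i - (i + 1 - 1 - j) = j by omega]
        · exact (Finset.sum_le_sum fun k _ => pow_le_pow_of_le_one hr0 hr1.le k.le_succ).trans
            (hgeom N)
    _ = 2 / (1 - r) := by ring

section SecondMoment

variable {Ω : Type*} [MeasurableSpace Ω] {μ : Measure Ω}

lemma ae_tendsto_zero_of_summable_integral_sq {Z : ℕ → Ω → ℝ} (hZ : ∀ m, Measurable (Z m))
    (hint : ∀ m, Integrable (fun ω => Z m ω ^ 2) μ)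
    (hsum : Summable fun m => ∫ ω, Z m ω ^ 2 ∂μ) :
    ∀ᵐ ω ∂μ, Tendsto (fun m => Z m ω) atTop (𝓝 0) := by
  have hmeas : ∀ m, Measurable fun ω => ENNReal.ofReal (Z m ω ^ 2) :=
    fun m => ((hZ m).pow_const 2).ennreal_ofReal
  have hfin : ∫⁻ ω, ∑' m, ENNReal.ofReal (Z m ω ^ 2) ∂μ ≠ ∞ := by
    rw [lintegral_tsum fun m => (hmeas m).aemeasurable]
    simp_rw [← ofReal_integral_eq_lintegral_ofReal (hint _) (ae_of_all _ fun _ => sq_nonneg _)]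
    rw [← ENNReal.ofReal_tsum_of_nonneg (fun m => integral_nonneg fun _ => sq_nonneg _) hsum]
    exact ENNReal.ofReal_ne_top
  filter_upwards [ae_lt_top (Measurable.tsum hmeas) hfin] with ω hω
  have hsq : Tendsto (fun m => Z m ω ^ 2) atTop (𝓝 0) := by
    have := (ENNReal.summable_toReal hω.ne).tendsto_atTop_zero
    simpa [ENNReal.toReal_ofReal (sq_nonneg _)] using this
  rw [tendsto_zero_iff_abs_tendsto_zero]
  simpa [Function.comp_def, Real.sqrt_sq_eq_abs] using (Real.continuous_sqrt.tendsto 0).comp hsq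

lemma integral_sq_sum_le_of_abs_integral_mul_le [IsFiniteMeasure μ] {Y : ℕ → Ω → ℝ}
    (hY : ∀ i, Measurable (Y i)) {M : ℝ} (hYM : ∀ i ω, |Y i ω| ≤ M) {K r : ℝ} (hr0 : 0 ≤ r)
    (hr1 : r < 1)
    (hcov : ∀ i j, |∫ ω, Y i ω * Y j ω ∂μ| ≤ K * r ^ Nat.dist i j) (s : Finset ℕ) :
    ∫ ω, (∑ i ∈ s, Y i ω) ^ 2 ∂μ ≤ s.card * (2 * K / (1 - r)) := by
  have hK : 0 ≤ K := by simpa using (abs_nonneg _).trans (hcov 0 0)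
  have hint : ∀ i j, Integrable (fun ω => Y i ω * Y j ω) μ := fun i j =>
    ((hY i).mul (hY j)).integrable_of_abs_le (M := M * M) fun ω => by
      rw [Pi.mul_apply, abs_mul]
      exact mul_le_mul (hYM i ω) (hYM j ω) (abs_nonneg _) ((abs_nonneg _).trans (hYM i ω))
  calc ∫ ω, (∑ i ∈ s, Y i ω) ^ 2 ∂μ
      = ∑ i ∈ s, ∑ j ∈ s, ∫ ω, Y i ω * Y j ω ∂μ := by
        simp_rw [sq, Finset.sum_mul_sum]
        rw [integral_finsetSum _ fun i _ => integrable_finsetSum _ fun j _ => hint i j]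
        exact Finset.sum_congr rfl fun i _ => integral_finsetSum _ fun j _ => hint i j
    _ ≤ ∑ i ∈ s, ∑ j ∈ s, K * r ^ Nat.dist i j := by
        gcongr with i _ j _
        exact (le_abs_self _).trans (hcov i j)
    _ = ∑ i ∈ s, K * ∑ j ∈ s, r ^ Nat.dist i j := by simp_rw [Finset.mul_sum]
    _ ≤ ∑ _i ∈ s, K * (2 / (1 - r)) := by
        gcongr with i
        exact sum_pow_dist_le hr0 hr1 i s
    _ = s.card * (2 * K / (1 - r)) := by rw [Finset.sum_const, nsmul_eq_mul]; ring

theorem ae_tendsto_div_of_integral_sq_le [IsFiniteMeasure μ] {S : ℕ → Ω → ℝ}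
    (hS : ∀ n, Measurable (S n)) (hS0 : ∀ ω, S 0 ω = 0)
    {M C : ℝ} (hinc : ∀ n ω, |S (n + 1) ω - S n ω| ≤ M)
    (hmom : ∀ n, ∫ ω, S n ω ^ 2 ∂μ ≤ C * n) :
    ∀ᵐ ω ∂μ, Tendsto (fun n => S n ω / n) atTop (𝓝 0) := by
  have hbdd : ∀ n ω, |S n ω / n| ≤ M := fun n ω => by
    have hM : 0 ≤ M := (abs_nonneg _).trans (hinc 0 ω)
    rcases n.eq_zero_or_pos with rfl | hn
    · simpa using hM
    have := abs_sub_le_of_abs_sub_succ_le (s := (S · ω)) (hinc · ω) n.zero_le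
    rw [hS0, sub_zero, Nat.sub_zero] at this
    rw [abs_div, Nat.abs_cast, div_le_iff₀ (by exact_mod_cast hn)]
    linarith
  have hint : ∀ n, Integrable (fun ω => (S n ω / n) ^ 2) μ := fun n =>
    (((hS n).div_const _).pow_const 2).integrable_of_abs_le (M := M ^ 2) fun ω => by
      rw [abs_pow]
      exact pow_le_pow_left₀ (abs_nonneg _) (hbdd n ω) 2
  have hmom' : ∀ n : ℕ, ∫ ω, (S n ω / n) ^ 2 ∂μ ≤ C / n := fun n => by
    rcases n.eq_zero_or_pos with rfl | hn
    · simp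
    have hn' : (0 : ℝ) < n := by exact_mod_cast hn
    simp_rw [div_pow, integral_div]
    calc (∫ ω, S n ω ^ 2 ∂μ) / n ^ 2 ≤ C * n / n ^ 2 := by gcongr; exact hmom n
      _ = C / n := by field_simp
  have hsum : Summable fun m : ℕ => ∫ ω, (S (m ^ 2) ω / (m ^ 2 : ℕ)) ^ 2 ∂μ := by
    refine Summable.of_nonneg_of_le (fun m => integral_nonneg fun ω => sq_nonneg _)
      (fun m => hmom' (m ^ 2)) ?_
    simpa [div_eq_mul_inv] using (Real.summable_one_div_nat_pow.2 one_lt_two).mul_left C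
  filter_upwards [ae_tendsto_zero_of_summable_integral_sq
    (fun m => (hS (m ^ 2)).div_const _) (fun m => hint (m ^ 2)) hsum] with ω hω
  exact tendsto_div_of_tendsto_div_sq (s := (S · ω)) (hinc · ω) hω

end SecondMoment

section Markov

variable {E : Type*} [MeasurableSpace E]

def HasMarkovProperty (p : ℕ → Kernel E E) (μ : Measure (ℕ → E)) : Prop :=
  ∀ n (g : (ℕ → E) → ℝ), Measurable g → (∀ ω, |g ω| ≤ 1) → DependsOn g (Set.Iic n) →
    ∀ A : Set E, MeasurableSet A →
      ∫ ω, g ω * Set.indicator A (fun _ => (1 : ℝ)) (ω (n + 1)) ∂μ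
        = ∫ ω, g ω * (p (n + 1) (ω n) A).toReal ∂μ

/-- `transitionOp p i m φ` is `p (i + 1) ⋯ p (i + m) φ`, i.e. `x ↦ E[φ(x_{i+m}) | x_i = x]`. -/
noncomputable def transitionOp (p : ℕ → Kernel E E) : ℕ → ℕ → (E → ℝ) → E → ℝ
  | _, 0, φ => φ
  | i, m + 1, φ => fun x => ∫ y, transitionOp p (i + 1) m φ y ∂p (i + 1) x

section TransitionOp

variable {p : ℕ → Kernel E E} {φ : E → ℝ} {M : ℝ}

lemma measurable_transitionOp (hφ : Measurable φ) (i m : ℕ) :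
    Measurable (transitionOp p i m φ) := by
  induction m generalizing i with
  | zero => exact hφ
  | succ m ih => exact (ih (i + 1)).stronglyMeasurable.integral_kernel.measurable

variable [∀ i, IsMarkovKernel (p i)]

lemma abs_transitionOp_le (hM : ∀ x, |φ x| ≤ M) (i m : ℕ) (x : E) :
    |transitionOp p i m φ x| ≤ M := by
  induction m generalizing i x with
  | zero => exact hM x
  | succ m ih => exact abs_integral_le_of_abs_le (ih (i + 1))

variable {π : Measure E} [IsProbabilityMeasure π]

lemma integral_transitionOp (hinv : ∀ i, (p (i + 1)).Invariant π) (hφ : Measurable φ)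
    (hM : ∀ x, |φ x| ≤ M) (i m : ℕ) :
    ∫ x, transitionOp p i m φ x ∂π = ∫ x, φ x ∂π := by
  induction m generalizing i with
  | zero => rfl
  | succ m ih =>
    exact ((hinv i).integral_integral ((measurable_transitionOp hφ _ _).integrable_of_abs_le
      (abs_transitionOp_le hM _ _))).trans (ih (i + 1))

lemma abs_transitionOp_le_of_integral_eq_zero (hinv : ∀ i, (p (i + 1)).Invariant π) {β : ℝ}
    (hβ : 0 ≤ β) (hminor : ∀ i x, ENNReal.ofReal β • π ≤ p (i + 1) x) (hφ : Measurable φ)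
    (hM : ∀ x, |φ x| ≤ M) (hφ0 : ∫ x, φ x ∂π = 0) (i m : ℕ) (x : E) :
    |transitionOp p i m φ x| ≤ (1 - β) ^ m * M := by
  induction m generalizing i x with
  | zero => simpa [transitionOp] using hM x
  | succ m ih =>
    rw [pow_succ, mul_comm _ (1 - β), mul_assoc]
    exact abs_integral_le_of_smul_le hβ (hminor i x) (measurable_transitionOp hφ _ _)
      (ih (i + 1)) ((integral_transitionOp hinv hφ hM _ _).trans hφ0)

end TransitionOp

namespace HasMarkovProperty

variable {p : ℕ → Kernel E E} [∀ i, IsMarkovKernel (p i)] {μ : Measure (ℕ → E)}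

section Finite

variable [IsFiniteMeasure μ]

lemma map_withDensity_succ (hμ : HasMarkovProperty p μ) {n : ℕ} {g : (ℕ → E) → ℝ≥0}
    (hg : Measurable g) (hg1 : ∀ ω, g ω ≤ 1) (hdep : DependsOn g (Set.Iic n)) :
    (μ.withDensity fun ω => g ω).map (fun ω => ω (n + 1))
      = p (n + 1) ∘ₘ (μ.withDensity fun ω => g ω).map (fun ω => ω n) := by
  set ν := μ.withDensity fun ω => (g ω : ℝ≥0∞)
  have : IsFiniteMeasure ν :=
    isFiniteMeasure_withDensity_of_le_one fun ω => ENNReal.coe_le_one_iff.2 (hg1 ω)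
  ext A hA
  rw [← ENNReal.toReal_eq_toReal_iff' (measure_ne_top _ _) (measure_ne_top _ _),
    Measure.bind_apply hA (Kernel.aemeasurable _), ← integral_toReal
      (Kernel.measurable_coe _ hA).aemeasurable (ae_of_all _ fun _ => measure_lt_top _ _),
    integral_map (measurable_pi_apply n).aemeasurable
      (Kernel.measurable_coe _ hA).ennreal_toReal.aestronglyMeasurable,
    ← measureReal_def, ← integral_indicator_one hA, integral_map
      (measurable_pi_apply _).aemeasurable (measurable_const.indicator hA).aestronglyMeasurable]
  have hmarkov := hμ n (fun ω => g ω) hg.coe_nnreal_real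
    (fun ω => by simpa using hg1 ω) (fun _ _ h => congrArg _ (hdep h)) A hA
  rw [integral_withDensity_eq_integral_smul hg, integral_withDensity_eq_integral_smul hg]
  exact hmarkov

lemma integral_mul_comp_succ_of_nonneg (hμ : HasMarkovProperty p μ) {n : ℕ}
    {g : (ℕ → E) → ℝ≥0} (hg : Measurable g) (hg1 : ∀ ω, g ω ≤ 1)
    (hdep : DependsOn g (Set.Iic n)) {φ : E → ℝ} (hφ : Measurable φ) {M : ℝ}
    (hφM : ∀ x, |φ x| ≤ M) :
    ∫ ω, g ω * φ (ω (n + 1)) ∂μ = ∫ ω, g ω * ∫ y, φ y ∂p (n + 1) (ω n) ∂μ := by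
  have hmap := hμ.map_withDensity_succ hg hg1 hdep
  have : IsFiniteMeasure (μ.withDensity fun ω => (g ω : ℝ≥0∞)) :=
    isFiniteMeasure_withDensity_of_le_one fun ω => ENNReal.coe_le_one_iff.2 (hg1 ω)
  have h₁ := integral_withDensity_eq_integral_smul hg (μ := μ) fun ω => φ (ω (n + 1))
  have h₂ := integral_withDensity_eq_integral_smul hg (μ := μ)
    fun ω => ∫ y, φ y ∂p (n + 1) (ω n)
  simp only [NNReal.smul_def, smul_eq_mul] at h₁ h₂
  rw [← h₁, ← h₂, ← integral_map (measurable_pi_apply _).aemeasurable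
      hφ.aestronglyMeasurable, hmap, Measure.integral_comp
      (hφ.integrable_of_abs_le hφM), integral_map (measurable_pi_apply _).aemeasurable
      hφ.stronglyMeasurable.integral_kernel.aestronglyMeasurable]

lemma integral_mul_comp_succ (hμ : HasMarkovProperty p μ) {n : ℕ} {g : (ℕ → E) → ℝ}
    (hg : Measurable g) {C : ℝ} (hgC : ∀ ω, |g ω| ≤ C) (hdep : DependsOn g (Set.Iic n))
    {φ : E → ℝ} (hφ : Measurable φ) {M : ℝ} (hφM : ∀ x, |φ x| ≤ M) :
    ∫ ω, g ω * φ (ω (n + 1)) ∂μ = ∫ ω, g ω * ∫ y, φ y ∂p (n + 1) (ω n) ∂μ := by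
  set c := max C 1
  have hc : 0 < c := zero_lt_one.trans_le (le_max_right _ _)
  -- `g / c = gp - gm` splits `g` into two densities with values in `[0, 1]`
  set gp : (ℕ → E) → ℝ≥0 := fun ω => (g ω / c).toNNReal
  set gm : (ℕ → E) → ℝ≥0 := fun ω => (-(g ω / c)).toNNReal
  have hsplit : ∀ ω, g ω = c * gp ω - c * gm ω := fun ω => by
    rw [← mul_sub, Real.coe_toNNReal', Real.coe_toNNReal', max_zero_sub_max_neg_zero_eq_self,
      mul_div_cancel₀ _ hc.ne']
  have hle : ∀ ω, |g ω / c| ≤ 1 := fun ω => by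
    rw [abs_div, abs_of_pos hc, div_le_one hc]
    exact (hgC ω).trans (le_max_left _ _)
  have hgp : Measurable gp := (hg.div_const c).real_toNNReal
  have hgm : Measurable gm := (hg.div_const c).neg.real_toNNReal
  have hgp1 : ∀ ω, gp ω ≤ 1 := fun ω => Real.toNNReal_le_one.2 ((le_abs_self _).trans (hle ω))
  have hgm1 : ∀ ω, gm ω ≤ 1 := fun ω => Real.toNNReal_le_one.2 ((neg_le_abs _).trans (hle ω))
  have hlin : ∀ F : (ℕ → E) → ℝ, Measurable F → (∀ ω, |F ω| ≤ M) →
      ∫ ω, g ω * F ω ∂μ = c * ∫ ω, gp ω * F ω ∂μ - c * ∫ ω, gm ω * F ω ∂μ := by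
    intro F hF hFM
    have hint : ∀ G : (ℕ → E) → ℝ≥0, Measurable G → (∀ ω, G ω ≤ 1) →
        Integrable (fun ω => c * (G ω * F ω)) μ := fun G hG hG1 =>
      ((hF.integrable_of_abs_le hFM).bdd_mul hG.coe_nnreal_real.aestronglyMeasurable
        (c := 1) (ae_of_all _ fun ω => by simpa using hG1 ω)).const_mul c
    simp_rw [hsplit, sub_mul, mul_assoc]
    rw [integral_sub (hint gp hgp hgp1) (hint gm hgm hgm1), integral_const_mul,
      integral_const_mul]
  rw [hlin (fun ω => φ (ω (n + 1))) (hφ.comp (measurable_pi_apply _)) fun ω => hφM _,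
    hμ.integral_mul_comp_succ_of_nonneg hgp hgp1 (fun _ _ h => by simp only [gp, hdep h]) hφ hφM,
    hμ.integral_mul_comp_succ_of_nonneg hgm hgm1 (fun _ _ h => by simp only [gm, hdep h]) hφ hφM,
    ← hlin (fun ω => ∫ y, φ y ∂p (n + 1) (ω n))
      (hφ.stronglyMeasurable.integral_kernel.measurable.comp (measurable_pi_apply _))
      fun ω => abs_integral_le_of_abs_le hφM]

lemma integral_mul_comp_add (hμ : HasMarkovProperty p μ) {i : ℕ} {g : (ℕ → E) → ℝ}
    (hg : Measurable g) {C : ℝ} (hgC : ∀ ω, |g ω| ≤ C) (hdep : DependsOn g (Set.Iic i))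
    {φ : E → ℝ} (hφ : Measurable φ) {M : ℝ} (hφM : ∀ x, |φ x| ≤ M) (m : ℕ) :
    ∫ ω, g ω * φ (ω (i + m)) ∂μ = ∫ ω, g ω * transitionOp p i m φ (ω i) ∂μ := by
  induction m generalizing i with
  | zero => rfl
  | succ m ih =>
    rw [← add_assoc, add_right_comm, ih (DependsOn.mono (Set.Iic_subset_Iic.2 i.le_succ) hdep)]
    exact hμ.integral_mul_comp_succ hg hgC hdep (measurable_transitionOp (p := p) hφ _ _)
      (abs_transitionOp_le hφM _ _)

end Finite

lemma abs_integral_mul_le_pow_dist [IsProbabilityMeasure μ] (hμ : HasMarkovProperty p μ)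
    {π : Measure E} [IsProbabilityMeasure π] (hinv : ∀ i, (p (i + 1)).Invariant π) {β : ℝ}
    (hβ : 0 ≤ β) (hminor : ∀ i x, ENNReal.ofReal β • π ≤ p (i + 1) x) {f : E → ℝ}
    (hf : Measurable f) {M : ℝ} (hfM : ∀ x, |f x| ≤ M) (hf0 : ∫ x, f x ∂π = 0) (i j : ℕ) :
    |∫ ω, f (ω i) * f (ω j) ∂μ| ≤ M ^ 2 * (1 - β) ^ Nat.dist i j := by
  wlog hij : i ≤ j generalizing i j
  · simpa only [mul_comm, Nat.dist_comm] using this j i (le_of_not_ge hij)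
  obtain ⟨m, rfl⟩ := Nat.exists_eq_add_of_le hij
  rw [hμ.integral_mul_comp_add (g := fun ω => f (ω i)) (hf.comp (measurable_pi_apply i))
    (fun ω => hfM (ω i)) (fun _ _ h => congrArg f (h i (Set.mem_Iic.2 le_rfl))) hf hfM m,
    Nat.dist_eq_sub_of_le hij, Nat.add_sub_cancel_left]
  refine abs_integral_le_of_abs_le fun ω => ?_
  calc |f (ω i) * transitionOp p i m f (ω i)| ≤ M * ((1 - β) ^ m * M) := by
        rw [abs_mul]
        exact mul_le_mul (hfM _)
          (abs_transitionOp_le_of_integral_eq_zero hinv hβ hminor hf hfM hf0 i m _)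
          (abs_nonneg _) ((abs_nonneg _).trans (hfM (ω i)))
    _ = M ^ 2 * (1 - β) ^ m := by ring

end HasMarkovProperty

end Markov

theorem HasMarkovProperty.ae_tendsto_sum_div_of_integral_eq_zero {E : Type*}
    [MeasurableSpace E] {p : ℕ → Kernel E E} [∀ i, IsMarkovKernel (p i)]
    {μ : Measure (ℕ → E)} [IsProbabilityMeasure μ] (hμ : HasMarkovProperty p μ)
    {π : Measure E} [IsProbabilityMeasure π] (hinv : ∀ i, (p (i + 1)).Invariant π) {β : ℝ}
    (hβ0 : 0 < β) (hβ1 : β ≤ 1) (hminor : ∀ i x, ENNReal.ofReal β • π ≤ p (i + 1) x)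
    {f : E → ℝ} (hf : Measurable f) {M : ℝ} (hfM : ∀ x, |f x| ≤ M) (hf0 : ∫ x, f x ∂π = 0) :
    ∀ᵐ ω ∂μ, Tendsto (fun n : ℕ => (∑ i ∈ Finset.Icc 1 n, f (ω i)) / n) atTop (𝓝 0) := by
  have hmom : ∀ n, ∫ ω, (∑ i ∈ Finset.Icc 1 n, f (ω i)) ^ 2 ∂μ ≤ 2 * M ^ 2 / β * n := by
    intro n
    simpa [mul_comm] using integral_sq_sum_le_of_abs_integral_mul_le
      (fun i => hf.comp (measurable_pi_apply i)) (fun i ω => hfM (ω i)) (sub_nonneg.2 hβ1)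
      (by linarith) (hμ.abs_integral_mul_le_pow_dist hinv hβ0.le hminor hf hfM hf0)
      (Finset.Icc 1 n)
  exact ae_tendsto_div_of_integral_sq_le
    (fun n => Finset.measurable_sum _ fun i _ => hf.comp (measurable_pi_apply i))
    (fun ω => by simp) (fun n ω => by simpa [Finset.sum_Icc_succ_top] using hfM _) hmom

theorem strong_law_of_large_numbers_of_minorization_general
    {E : Type*} [MeasurableSpace E]
    (Pi : Measure E) [IsProbabilityMeasure Pi]
    (p : ℕ → Kernel E E) [∀ i, IsMarkovKernel (p i)]
    (hinv : ∀ i ≥ 1, ∀ A : Set E, MeasurableSet A → ∫⁻ x, p i x A ∂Pi = Pi A)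
    (β : ℝ) (hβ0 : 0 < β) (hβ1 : β < 1)
    (hminor : ∀ i ≥ 1, ∀ x : E, ∀ A : Set E, MeasurableSet A →
      ENNReal.ofReal β * Pi A ≤ p i x A)
    (h : E → ℝ) (hmeas : Measurable h) (hmax : ℝ) (hbd : ∀ x, |h x| ≤ hmax)
    -- `μ` is the law of the chain on the canonical path space (Ionescu–Tulcea):
    (μ : Measure (ℕ → E)) [IsProbabilityMeasure μ]
    -- the Markov property: conditionally on the past up to time `n`, the state at
    -- time `n+1` is drawn from `p (n+1) (ω n)`:
    (hmarkov : ∀ n : ℕ, ∀ g : (ℕ → E) → ℝ, Measurable g → (∀ ω, |g ω| ≤ 1) →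
      (∀ ω ω' : ℕ → E, (∀ i ≤ n, ω i = ω' i) → g ω = g ω') →
      ∀ A : Set E, MeasurableSet A →
        ∫ ω, g ω * Set.indicator A (fun _ => (1 : ℝ)) (ω (n + 1)) ∂μ
          = ∫ ω, g ω * (p (n + 1) (ω n) A).toReal ∂μ) :
    ∀ᵐ ω ∂μ, Tendsto
      (fun n : ℕ => (∑ i ∈ Finset.Icc 1 n, h (ω i)) / n)
      atTop (nhds (∫ x, h x ∂Pi)) := by
  set c := ∫ x, h x ∂Pi
  have hinv' : ∀ i, (p (i + 1)).Invariant Pi := fun i => Measure.ext fun A hA => by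
    rw [Measure.bind_apply hA (Kernel.aemeasurable _)]
    exact hinv (i + 1) (Nat.le_add_left 1 i) A hA
  have hminor' : ∀ i x, ENNReal.ofReal β • Pi ≤ p (i + 1) x := fun i x =>
    Measure.le_iff.2 fun A hA => hminor (i + 1) (Nat.le_add_left 1 i) x A hA
  have hc : |c| ≤ hmax := abs_integral_le_of_abs_le hbd
  have hlim := HasMarkovProperty.ae_tendsto_sum_div_of_integral_eq_zero (f := fun x => h x - c)
    hmarkov hinv' hβ0 hβ1.le hminor' (hmeas.sub measurable_const)
    (fun x => (abs_sub _ _).trans (add_le_add (hbd x) hc))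
    (by simp [integral_sub (hmeas.integrable_of_abs_le hbd) (integrable_const c), c])
  filter_upwards [hlim] with ω hω
  rw [← zero_add c]
  refine (hω.add_const c).congr' ?_
  filter_upwards [eventually_ne_atTop 0] with n hn
  simp only [Finset.sum_sub_distrib, Finset.sum_const, Nat.card_Icc, add_tsub_cancel_right,
    nsmul_eq_mul]
  field_simp
  ring

/-- **Theorem 2, Strong law of large numbers.**
Let `(xₙ)` be the time-inhomogeneous Markov chain with initial point `x₀` and
transition kernels `pᵢ` (each leaving `Π` invariant), realized on the canonical
path space `ℕ → E` by a probability measure `μ` satisfying the Markov property.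
Under the minorization condition `pᵢ(x, A) ≥ β Π(A)`, for every bounded measurable
`h : E → ℝ`, `Sₙ/n → ∫ h dΠ` almost surely, where `Sₙ = ∑_{i=1}^n h(xᵢ)`. -/
theorem strong_law_of_large_numbers_of_minorization
    {E : Type*} [MeasurableSpace E]
    (Pi : Measure E) [IsProbabilityMeasure Pi]
    (p : ℕ → Kernel E E) [∀ i, IsMarkovKernel (p i)]
    (hinv : ∀ i ≥ 1, ∀ A : Set E, MeasurableSet A → ∫⁻ x, p i x A ∂Pi = Pi A)
    (β : ℝ) (hβ0 : 0 < β) (hβ1 : β < 1)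
    (hminor : ∀ i ≥ 1, ∀ x : E, ∀ A : Set E, MeasurableSet A →
      ENNReal.ofReal β * Pi A ≤ p i x A)
    (h : E → ℝ) (hmeas : Measurable h) (hmax : ℝ) (hbd : ∀ x, |h x| ≤ hmax)
    (x₀ : E)
    -- `μ` is the law of the chain on the canonical path space (Ionescu–Tulcea):
    (μ : Measure (ℕ → E)) [IsProbabilityMeasure μ]
    (hstart : ∀ᵐ ω ∂μ, ω 0 = x₀)
    -- the Markov property: conditionally on the past up to time `n`, the state at
    -- time `n+1` is drawn from `p (n+1) (ω n)`:
    (hmarkov : ∀ n : ℕ, ∀ g : (ℕ → E) → ℝ, Measurable g → (∀ ω, |g ω| ≤ 1) →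
      (∀ ω ω' : ℕ → E, (∀ i ≤ n, ω i = ω' i) → g ω = g ω') →
      ∀ A : Set E, MeasurableSet A →
        ∫ ω, g ω * Set.indicator A (fun _ => (1 : ℝ)) (ω (n + 1)) ∂μ
          = ∫ ω, g ω * (p (n + 1) (ω n) A).toReal ∂μ) :
    ∀ᵐ ω ∂μ, Tendsto
      (fun n : ℕ => (∑ i ∈ Finset.Icc 1 n, h (ω i)) / n)
      atTop (nhds (∫ x, h x ∂Pi)) :=
  strong_law_of_large_numbers_of_minorization_general Pi p hinv β hβ0 hβ1 hminor h hmeas hmax hbd μ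
    hmarkov
end

section
/- (Corollary 1(i).) Let π be a probability density on ℝ^d with π > 0 everywhere, and let Π be the probability measure with density π. Let q(z|x) be a proposal density with q(z|x) > 0 and q(z|x) ≥ β π(z) for all x, z, where 0 < β < 1. Let p be the Metropolis–Hastings kernel p(x, A) = ∫_A α(z, x) q(z|x) dz + 1_A(x) (1 − ∫ α(z, x) q(z|x) dz), where α(z, x) = min(1, π(z) q(x|z) / (π(x) q(z|x))). Then p(x, A) ≥ β Π(A) for every x ∈ ℝ^d and every measurable set A. -/
open MeasureTheory

/-!
The acceptance-weighted proposal is `α(z,x) q(z|x) = min (q(z|x)) (π(z) q(x|z) / π(x))`, and the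
minorization `q ≥ β π`, applied once at `(z, x)` and once at `(x, z)`, bounds both terms of the
minimum from below by `β π(z)`. Integrating over `A` gives `β Π(A)`; the rejection term is
nonnegative because `α ≤ 1` and `q(·|x)` has total mass one.
-/

noncomputable section

namespace MetropolisHastings

variable {α : Type*} {π : α → ℝ} {q : α → α → ℝ} {β : ℝ} {z x : α}

/-- `acceptance π q z x` is `α(z, x)`, with the convention `q z x = q(z|x)`. -/
def acceptance (π : α → ℝ) (q : α → α → ℝ) (z x : α) : ℝ :=
  min 1 (π z * q x z / (π x * q z x))

/-- The value `p(x, A)` of the Metropolis–Hastings kernel with respect to the reference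
measure `μ`. -/
def kernel [MeasurableSpace α] (μ : Measure α) (π : α → ℝ) (q : α → α → ℝ) (x : α)
    (A : Set α) : ℝ :=
  (∫ z in A, acceptance π q z x * q z x ∂μ)
    + A.indicator (fun _ => (1 : ℝ)) x * (1 - ∫ z, acceptance π q z x * q z x ∂μ)

lemma acceptance_nonneg (hπ : ∀ x, 0 ≤ π x) (hq : ∀ z x, 0 ≤ q z x) :
    0 ≤ acceptance π q z x :=
  le_min zero_le_one <|
    div_nonneg (mul_nonneg (hπ z) (hq x z)) (mul_nonneg (hπ x) (hq z x))

lemma acceptance_le_one : acceptance π q z x ≤ 1 :=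
  min_le_left _ _

lemma acceptance_mul_eq_min (hq : 0 < q z x) :
    acceptance π q z x * q z x = min (q z x) (π z * q x z / π x) := by
  rw [acceptance, min_mul_of_nonneg _ _ hq.le, one_mul]
  congr 1
  field_simp

lemma mul_le_acceptance_mul (hπx : 0 < π x) (hπz : 0 ≤ π z) (hq : 0 < q z x)
    (hzx : β * π z ≤ q z x) (hxz : β * π x ≤ q x z) :
    β * π z ≤ acceptance π q z x * q z x := by
  rw [acceptance_mul_eq_min hq]
  refine le_min hzx ((le_div_iff₀ hπx).2 ?_)
  calc β * π z * π x = π z * (β * π x) := by ring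
    _ ≤ π z * q x z := mul_le_mul_of_nonneg_left hxz hπz

section Integral

variable [MeasurableSpace α] {μ : Measure α}

lemma measurable_acceptance_mul (hπ : Measurable π) (hq : Measurable (Function.uncurry q))
    (x : α) : Measurable fun z => acceptance π q z x * q z x := by
  have hq₁ : Measurable fun z => q z x := hq.comp (measurable_id.prodMk measurable_const)
  have hq₂ : Measurable fun z => q x z := hq.comp (measurable_const.prodMk measurable_id)
  exact (measurable_const.min ((hπ.mul hq₂).div (measurable_const.mul hq₁))).mul hq₁

lemma integrable_acceptance_mul (hπmeas : Measurable π) (hπ : ∀ x, 0 ≤ π x)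
    (hqmeas : Measurable (Function.uncurry q)) (hq : ∀ z x, 0 ≤ q z x)
    (hqx : Integrable (fun z => q z x) μ) :
    Integrable (fun z => acceptance π q z x * q z x) μ := by
  refine hqx.mono' (measurable_acceptance_mul hπmeas hqmeas x).aestronglyMeasurable
    (ae_of_all _ fun z => ?_)
  rw [Real.norm_of_nonneg (mul_nonneg (acceptance_nonneg hπ hq) (hq z x))]
  exact mul_le_of_le_one_left (hq z x) acceptance_le_one

lemma integral_acceptance_mul_le_one (hπmeas : Measurable π) (hπ : ∀ x, 0 ≤ π x)
    (hqmeas : Measurable (Function.uncurry q)) (hq : ∀ z x, 0 ≤ q z x)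
    (hqint : ∫ z, q z x ∂μ = 1) :
    ∫ z, acceptance π q z x * q z x ∂μ ≤ 1 := by
  have hqx : Integrable (fun z => q z x) μ := .of_integral_ne_zero (by simp [hqint])
  calc ∫ z, acceptance π q z x * q z x ∂μ ≤ ∫ z, q z x ∂μ :=
        integral_mono (integrable_acceptance_mul hπmeas hπ hqmeas hq hqx) hqx
          fun z => mul_le_of_le_one_left (hq z x) acceptance_le_one
    _ = 1 := hqint

theorem mul_setIntegral_le_kernel (hπmeas : Measurable π) (hπpos : ∀ x, 0 < π x)
    (hπint : Integrable π μ) (hqmeas : Measurable (Function.uncurry q))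
    (hqpos : ∀ z x, 0 < q z x) (hqint : ∀ x, ∫ z, q z x ∂μ = 1)
    (hdom : ∀ z x, β * π z ≤ q z x) (x : α) (A : Set α) :
    β * ∫ z in A, π z ∂μ ≤ kernel μ π q x A := by
  have hπ : ∀ x, 0 ≤ π x := fun x => (hπpos x).le
  have hq : ∀ z x, 0 ≤ q z x := fun z x => (hqpos z x).le
  have hqx : Integrable (fun z => q z x) μ := .of_integral_ne_zero (by simp [hqint x])
  have accepted : β * ∫ z in A, π z ∂μ ≤ ∫ z in A, acceptance π q z x * q z x ∂μ := by
    rw [← integral_const_mul]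
    exact setIntegral_mono (hπint.const_mul β).integrableOn
      (integrable_acceptance_mul hπmeas hπ hqmeas hq hqx).integrableOn
      fun z => mul_le_acceptance_mul (hπpos x) (hπ z) (hqpos z x) (hdom z x) (hdom x z)
  have rejected :
      0 ≤ A.indicator (fun _ => (1 : ℝ)) x * (1 - ∫ z, acceptance π q z x * q z x ∂μ) :=
    mul_nonneg (Set.indicator_nonneg (fun _ _ => zero_le_one) x)
      (sub_nonneg.2 (integral_acceptance_mul_le_one hπmeas hπ hqmeas hq (hqint x)))
  rw [kernel]
  linarith

end Integral

end MetropolisHastings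

end

theorem mh_kernel_minorization_general {d : ℕ}
    (π : (Fin d → ℝ) → ℝ) (q : (Fin d → ℝ) → (Fin d → ℝ) → ℝ)
    (hπmeas : Measurable π) (hπpos : ∀ x, 0 < π x)
    (hπint : ∫ x, π x = 1)
    (hqmeas : Measurable (Function.uncurry q)) (hqpos : ∀ z x, 0 < q z x)
    (hqint : ∀ x, ∫ z, q z x = 1)
    (β : ℝ)
    (hdom : ∀ z x, β * π z ≤ q z x) :
    ∀ (x : Fin d → ℝ) (A : Set (Fin d → ℝ)), MeasurableSet A →
      β * ∫ z in A, π z ≤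
        (∫ z in A, min 1 (π z * q x z / (π x * q z x)) * q z x)
          + Set.indicator A (fun _ => (1 : ℝ)) x
            * (1 - ∫ z, min 1 (π z * q x z / (π x * q z x)) * q z x) := fun x A _ =>
  MetropolisHastings.mul_setIntegral_le_kernel hπmeas hπpos
    (.of_integral_ne_zero (by simp [hπint])) hqmeas hqpos hqint hdom x A

/-- **Corollary 1(i).** If the proposal density satisfies
`q(z|x) ≥ β π(z)` for all `x, z` with `0 < β < 1`, then the Metropolis–Hastings
kernel `p(x, A) = ∫_A α(z,x) q(z|x) dz + 1_A(x)(1 − ∫ α(z,x) q(z|x) dz)`, with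
`α(z,x) = min(1, π(z)q(x|z)/(π(x)q(z|x)))`, satisfies `p(x, A) ≥ β Π(A)` for all
`x` and all measurable `A`, where `Π(A) = ∫_A π(z) dz`.  Here `q z x = q(z|x)`. -/
theorem mh_kernel_minorization {d : ℕ}
    (π : (Fin d → ℝ) → ℝ) (q : (Fin d → ℝ) → (Fin d → ℝ) → ℝ)
    (hπmeas : Measurable π) (hπpos : ∀ x, 0 < π x)
    (hπint : ∫ x, π x = 1)
    (hqmeas : Measurable (Function.uncurry q)) (hqpos : ∀ z x, 0 < q z x)
    (hqint : ∀ x, ∫ z, q z x = 1)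
    (β : ℝ) (hβ0 : 0 < β) (hβ1 : β < 1)
    (hdom : ∀ z x, β * π z ≤ q z x) :
    ∀ (x : Fin d → ℝ) (A : Set (Fin d → ℝ)), MeasurableSet A →
      β * ∫ z in A, π z ≤
        (∫ z in A, min 1 (π z * q x z / (π x * q z x)) * q z x)
          + Set.indicator A (fun _ => (1 : ℝ)) x
            * (1 - ∫ z, min 1 (π z * q x z / (π x * q z x)) * q z x) :=
  mh_kernel_minorization_general π q hπmeas hπpos hπint hqmeas hqpos hqint β hdom
end

section
/- (Corollary 1(ii).) Let π be a probability density on ℝ^d with π > 0 everywhere and associated probability measure Π. Suppose the proposal density is a mixture q(z|x) = ω q₁(z|x) + (1 − ω) q₂(z|x) with 0 < ω < 1, where q₁ and q₂ are proposal densities, q(z|x) > 0 for all x, z, and q₁(z|x) ≥ β π(z) for all x, z with 0 < β < 1. Then the Metropolis–Hastings kernel p built from proposal q satisfies p(x, A) ≥ ω β Π(A) for every x and every measurable set A. -/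
/-! Write `a(x, z) = min 1 (π z q(x|z) / (π x q(z|x))) q(z|x)` for the density of accepted moves.
Since `q(z|x) > 0`, `a(x, z) = min (q(z|x), π z q(x|z) / π x)`. The mixture bound
`q(z|y) ≥ ω q₁(z|y) ≥ ω β π z` holds for all `z, y`, so both arguments of the minimum are
at least `ω β π z` (the second after using it with `z, y := x, z`). Integrating over `A` bounds
the acceptance part of `p(x, A)`, and the rejection part is nonnegative because `a ≤ q`
integrates to at most `1`. -/

open MeasureTheory Function

variable {α : Type*} {π : α → ℝ} {q : α → α → ℝ}

noncomputable def mhAcceptDensity (π : α → ℝ) (q : α → α → ℝ) (x z : α) : ℝ :=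
  min 1 (π z * q x z / (π x * q z x)) * q z x

lemma mhAcceptDensity_nonneg (hπ : ∀ y, 0 ≤ π y) (hq : ∀ z y, 0 ≤ q z y) (x z : α) :
    0 ≤ mhAcceptDensity π q x z :=
  mul_nonneg (le_min zero_le_one <| div_nonneg (mul_nonneg (hπ z) (hq x z))
    (mul_nonneg (hπ x) (hq z x))) (hq z x)

lemma mhAcceptDensity_le {x z : α} (hqzx : 0 ≤ q z x) : mhAcceptDensity π q x z ≤ q z x :=
  mul_le_of_le_one_left hqzx (min_le_left _ _)

lemma mhAcceptDensity_eq_min {x z : α} (hπx : 0 < π x) (hqzx : 0 < q z x) :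
    mhAcceptDensity π q x z = min (q z x) (π z * q x z / π x) := by
  rw [mhAcceptDensity, min_mul_of_nonneg _ _ hqzx.le, one_mul]
  congr 1
  field_simp

lemma mul_le_mhAcceptDensity {c : ℝ} (hπ : ∀ y, 0 < π y) (hq : ∀ z y, 0 < q z y)
    (hmin : ∀ z y, c * π z ≤ q z y) (x z : α) : c * π z ≤ mhAcceptDensity π q x z := by
  rw [mhAcceptDensity_eq_min (hπ x) (hq z x)]
  refine le_min (hmin z x) ?_
  rw [le_div_iff₀ (hπ x)]
  calc c * π z * π x = π z * (c * π x) := by ring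
    _ ≤ π z * q x z := mul_le_mul_of_nonneg_left (hmin x z) (hπ z).le

variable [MeasurableSpace α] {μ : Measure α}

lemma measurable_mhAcceptDensity (hπ : Measurable π) (hq : Measurable (uncurry q)) (x : α) :
    Measurable (mhAcceptDensity π q x) :=
  (measurable_const.min ((hπ.mul hq.of_uncurry_left).div
    (measurable_const.mul hq.of_uncurry_right))).mul hq.of_uncurry_right

lemma integral_mhAcceptDensity_le_one {x : α} (hπ : ∀ y, 0 ≤ π y) (hq : ∀ z y, 0 ≤ q z y)
    (hqI : Integrable (q · x) μ) (hq_one : ∫ z, q z x ∂μ = 1) :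
    ∫ z, mhAcceptDensity π q x z ∂μ ≤ 1 :=
  hq_one ▸ integral_mono_of_nonneg (.of_forall (mhAcceptDensity_nonneg hπ hq x)) hqI
    (.of_forall fun z => mhAcceptDensity_le (hq z x))

theorem mhKernel_minorization {c : ℝ} (hc : 0 ≤ c) (hπ : ∀ y, 0 < π y)
    (hq : ∀ z y, 0 < q z y) (hπm : Measurable π) (hqm : Measurable (uncurry q))
    (hmin : ∀ z y, c * π z ≤ q z y) {x : α} (hqI : Integrable (q · x) μ)
    (hq_one : ∫ z, q z x ∂μ = 1) (A : Set α) :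
    c * ∫ z in A, π z ∂μ ≤ (∫ z in A, mhAcceptDensity π q x z ∂μ)
      + A.indicator (fun _ => (1 : ℝ)) x * (1 - ∫ z, mhAcceptDensity π q x z ∂μ) := by
  have hπ₀ : ∀ y, 0 ≤ π y := fun y => (hπ y).le
  have hq₀ : ∀ z y, 0 ≤ q z y := fun z y => (hq z y).le
  have hacc : c * ∫ z in A, π z ∂μ ≤ ∫ z in A, mhAcceptDensity π q x z ∂μ := by
    have haI : Integrable (mhAcceptDensity π q x) μ :=
      hqI.mono' (measurable_mhAcceptDensity hπm hqm x).aestronglyMeasurable <| .of_forall fun z => by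
        rw [Real.norm_of_nonneg (mhAcceptDensity_nonneg hπ₀ hq₀ x z)]
        exact mhAcceptDensity_le (hq₀ z x)
    rw [← integral_const_mul]
    exact setIntegral_mono_of_nonneg (fun z _ => mul_nonneg hc (hπ₀ z))
      (fun z _ => mul_le_mhAcceptDensity hπ hq hmin x z) haI.integrableOn
  have hrej : 0 ≤ A.indicator (fun _ => (1 : ℝ)) x * (1 - ∫ z, mhAcceptDensity π q x z ∂μ) :=
    mul_nonneg (Set.indicator_nonneg (fun _ _ => zero_le_one) x)
      (sub_nonneg.2 (integral_mhAcceptDensity_le_one hπ₀ hq₀ hqI hq_one))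
  linarith

theorem mh_mixture_kernel_minorization_general {d : ℕ}
    (π : (Fin d → ℝ) → ℝ) (q₁ q₂ : (Fin d → ℝ) → (Fin d → ℝ) → ℝ)
    (hπmeas : Measurable π) (hπpos : ∀ x, 0 < π x)
    (hq₁meas : Measurable (Function.uncurry q₁))
    (hq₁int : ∀ x, ∫ z, q₁ z x = 1)
    (hq₂meas : Measurable (Function.uncurry q₂)) (hq₂nn : ∀ z x, 0 ≤ q₂ z x)
    (hq₂int : ∀ x, ∫ z, q₂ z x = 1)
    (ω : ℝ) (hω0 : 0 < ω) (hω1 : ω < 1)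
    (q : (Fin d → ℝ) → (Fin d → ℝ) → ℝ)
    (hq : ∀ z x, q z x = ω * q₁ z x + (1 - ω) * q₂ z x)
    (hqpos : ∀ z x, 0 < q z x)
    (β : ℝ) (hβ0 : 0 < β)
    (hdom : ∀ z x, β * π z ≤ q₁ z x) :
    ∀ (x : Fin d → ℝ) (A : Set (Fin d → ℝ)), MeasurableSet A →
      ω * β * ∫ z in A, π z ≤
        (∫ z in A, min 1 (π z * q x z / (π x * q z x)) * q z x)
          + Set.indicator A (fun _ => (1 : ℝ)) x
            * (1 - ∫ z, min 1 (π z * q x z / (π x * q z x)) * q z x) := by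
  intro x A _
  obtain rfl : q = fun z y => ω * q₁ z y + (1 - ω) * q₂ z y := funext₂ hq
  have hq₁I : Integrable (q₁ · x) := .of_integral_ne_zero (by simp [hq₁int])
  have hq₂I : Integrable (q₂ · x) := .of_integral_ne_zero (by simp [hq₂int])
  have hmin (z y) : ω * β * π z ≤ ω * q₁ z y + (1 - ω) * q₂ z y := by
    have := mul_le_mul_of_nonneg_left (hdom z y) hω0.le
    have := mul_nonneg (sub_nonneg.2 hω1.le) (hq₂nn z y)
    linarith
  refine mhKernel_minorization (mul_nonneg hω0.le hβ0.le) hπpos hqpos hπmeas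
    ((hq₁meas.const_mul ω).add (hq₂meas.const_mul (1 - ω))) hmin
    ((hq₁I.const_mul ω).add (hq₂I.const_mul (1 - ω))) ?_ A
  rw [integral_add (hq₁I.const_mul ω) (hq₂I.const_mul (1 - ω)), integral_const_mul,
    integral_const_mul, hq₁int, hq₂int]
  ring

/-- **Corollary 1(ii).** If the proposal density is the mixture
`q(z|x) = ω q₁(z|x) + (1−ω) q₂(z|x)` with `0 < ω < 1` and `q₁(z|x) ≥ β π(z)` for all
`x, z` with `0 < β < 1`, then the Metropolis–Hastings kernel built from `q` satisfies
`p(x, A) ≥ ω β Π(A)` for every `x` and measurable `A`, where `Π(A) = ∫_A π(z) dz`.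
Here `q₁ z x = q₁(z|x)` etc. -/
theorem mh_mixture_kernel_minorization {d : ℕ}
    (π : (Fin d → ℝ) → ℝ) (q₁ q₂ : (Fin d → ℝ) → (Fin d → ℝ) → ℝ)
    (hπmeas : Measurable π) (hπpos : ∀ x, 0 < π x)
    (hπint : ∫ x, π x = 1)
    (hq₁meas : Measurable (Function.uncurry q₁)) (hq₁nn : ∀ z x, 0 ≤ q₁ z x)
    (hq₁int : ∀ x, ∫ z, q₁ z x = 1)
    (hq₂meas : Measurable (Function.uncurry q₂)) (hq₂nn : ∀ z x, 0 ≤ q₂ z x)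
    (hq₂int : ∀ x, ∫ z, q₂ z x = 1)
    (ω : ℝ) (hω0 : 0 < ω) (hω1 : ω < 1)
    (q : (Fin d → ℝ) → (Fin d → ℝ) → ℝ)
    (hq : ∀ z x, q z x = ω * q₁ z x + (1 - ω) * q₂ z x)
    (hqpos : ∀ z x, 0 < q z x)
    (β : ℝ) (hβ0 : 0 < β) (hβ1 : β < 1)
    (hdom : ∀ z x, β * π z ≤ q₁ z x) :
    ∀ (x : Fin d → ℝ) (A : Set (Fin d → ℝ)), MeasurableSet A →
      ω * β * ∫ z in A, π z ≤
        (∫ z in A, min 1 (π z * q x z / (π x * q z x)) * q z x)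
          + Set.indicator A (fun _ => (1 : ℝ)) x
            * (1 - ∫ z, min 1 (π z * q x z / (π x * q z x)) * q z x) :=
  mh_mixture_kernel_minorization_general π q₁ q₂ hπmeas hπpos hq₁meas hq₁int hq₂meas hq₂nn hq₂int ω
    hω0 hω1 q hq hqpos β hβ0 hdom
end
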